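/- arXiv:math/0101248 — 2 statements merged into one kernel-verified Lean document; each statement's English description precedes it below -/
import Mathlib

section
/- Let n ≥ 4 and k_1,...,k_{n-1} real. With r_i = (n-2) - (n-3)k_i - Σ_j k_j and S = Σ_i r_i, the following are equivalent: (a) k_i > 0 for all i; (b) 2(n-2) r_i - S - (n-2)(n-3) < 0 for all i. -/
open Finset in
theorem convexity_iff_ricci_condition (n : ℕ) (hn : 4 ≤ n)
    (k : Fin (n - 1) → ℝ) (r : Fin (n - 1) → ℝ) (S : ℝ)
    (hr : ∀ i, r i = ((n : ℝ) - 2) - ((n : ℝ) - 3) * k i - ∑ j, k j)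
    (hS : S = ∑ i, r i) :
    (∀ i, 0 < k i) ↔
      (∀ i, 2 * ((n : ℝ) - 2) * r i - S - ((n : ℝ) - 2) * ((n : ℝ) - 3) < 0) := by
  have hcard : ((Finset.univ : Finset (Fin (n-1))).card : ℝ) = (n : ℝ) - 1 := by
    simp [Finset.card_univ]
    push_cast [Nat.cast_sub (by omega : 1 ≤ n)]
    ring
  have hSval : S = ((n:ℝ) - 1) * ((n:ℝ) - 2) - (2*(n:ℝ) - 4) * ∑ j, k j := by
    rw [hS]
    have : ∑ i, r i = ∑ i, (((n : ℝ) - 2) - ((n : ℝ) - 3) * k i - ∑ j, k j) :=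
      Finset.sum_congr rfl fun i _ => hr i
    rw [this]
    simp only [Finset.sum_sub_distrib, Finset.sum_const, nsmul_eq_mul,
      hcard, ← Finset.mul_sum]
    ring
  have key : ∀ i, 2 * ((n : ℝ) - 2) * r i - S - ((n : ℝ) - 2) * ((n : ℝ) - 3)
      = -(2 * ((n:ℝ) - 2) * ((n:ℝ) - 3) * k i) := by
    intro i
    rw [hr i, hSval]
    ring
  have hc : (0:ℝ) < 2 * ((n:ℝ) - 2) * ((n:ℝ) - 3) := by
    have : (4:ℝ) ≤ (n:ℝ) := by exact_mod_cast hn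
    nlinarith
  constructor
  · intro h i
    rw [key i]
    have := h i
    nlinarith
  · intro h i
    have := h i
    rw [key i] at this
    nlinarith
end

section
/- Let n ≥ 4 and k_1,...,k_{n-1} real. With r_i = (n-2) - (n-3)k_i - Σ_j k_j and S = Σ_i r_i, the following are equivalent: (a) 0 < k_i < 1 for all i; (b) |2(n-2) r_i - S| < (n-2)(n-3) for all i. -/
open Finset in
theorem tame_convexity_iff_ricci_condition (n : ℕ) (hn : 4 ≤ n)
    (k : Fin (n - 1) → ℝ) (r : Fin (n - 1) → ℝ) (S : ℝ)
    (hr : ∀ i, r i = ((n : ℝ) - 2) - ((n : ℝ) - 3) * k i - ∑ j, k j)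
    (hS : S = ∑ i, r i) :
    (∀ i, 0 < k i ∧ k i < 1) ↔
      (∀ i, |2 * ((n : ℝ) - 2) * r i - S| < ((n : ℝ) - 2) * ((n : ℝ) - 3)) := by
  have hn4 : (4:ℝ) ≤ (n:ℝ) := by exact_mod_cast hn
  have hpos : (0:ℝ) < ((n:ℝ) - 2) * ((n:ℝ) - 3) := by nlinarith
  have hcard : ((Finset.univ : Finset (Fin (n-1))).card : ℝ) = (n:ℝ) - 1 := by
    rw [Finset.card_univ, Fintype.card_fin, Nat.cast_sub (by omega : 1 ≤ n)]
    simp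
  have hsum : S = ((n:ℝ) - 1) * ((n:ℝ) - 2) - (2 * (n:ℝ) - 4) * (∑ j, k j) := by
    rw [hS]
    simp only [hr]
    simp only [Finset.sum_sub_distrib, Finset.sum_const, ← Finset.mul_sum,
      nsmul_eq_mul, hcard]
    ring
  have key : ∀ i, 2 * ((n:ℝ) - 2) * r i - S
      = ((n:ℝ) - 2) * ((n:ℝ) - 3) * (1 - 2 * k i) := by
    intro i
    rw [hr i, hsum]
    ring
  constructor
  · intro h i
    rw [key i, abs_lt]
    obtain ⟨h1, h2⟩ := h i
    constructor <;> nlinarith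
  · intro h i
    have := h i
    rw [key i, abs_lt] at this
    obtain ⟨h1, h2⟩ := this
    constructor <;> nlinarith
end
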